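/- Let 𝒟 be a dyadic grid in ℝ^n, let p_1,p_2>1, 1<m_1≤p_1, 1<m_2≤p_2, let a_1,a_2≥0 be integers, and let f,g be nonnegative, bounded, compactly supported functions on ℝ^n. For each k∈ℤ, let {Q_{k,j}}_j be the collection of cubes of 𝒟 that are maximal with respect to the property ‖f‖_{L^{p_1/m_1}(log L)^{(p_1/m_1)a_1},Q}·‖g‖_{L^{p_2/m_2}(log L)^{(p_2/m_2)a_2},Q} > 4^{(n+2)k}. Then for every k and j, |Q_{k,j} ∩ ⋃_i Q_{k+1,i}| ≤ |Q_{k,j}|/2; consequently, setting E_{k,j}=Q_{k,j}∖⋃_i Q_{k+1,i}, the sets {E_{k,j}}_{k,j} are pairwise disjoint, |Q_{k,j}|≤2|E_{k,j}|, and the family {Q_{k,j}}_{k,j} is sparse. -/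

import Mathlib

open MeasureTheory ENNReal Set Filter

noncomputable section

abbrev Euc (n : ℕ) := EuclideanSpace ℝ (Fin n)

/-- An axis-parallel half-open cube in `ℝⁿ`: a translate of `[0, ℓ)ⁿ`. -/
structure Cube (n : ℕ) where
  corner : Fin n → ℝ
  side : ℝ
  side_pos : 0 < side

namespace Cube

/-- The underlying set of a cube. -/
def set {n : ℕ} (Q : Cube n) : Set (Euc n) :=
  {x | ∀ i, Q.corner i ≤ x i ∧ x i < Q.corner i + Q.side}

/-- The volume `|Q| = ℓ(Q)^n`. -/
def vol {n : ℕ} (Q : Cube n) : ℝ := Q.side ^ n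

/-- The concentric dilate `3Q`. -/
def three {n : ℕ} (Q : Cube n) : Cube n :=
  ⟨fun i => Q.corner i - Q.side, 3 * Q.side, by have := Q.side_pos; linarith⟩

end Cube

/-- A weight: a nonnegative locally integrable function. -/
def IsWeight {n : ℕ} (v : Euc n → ℝ) : Prop :=
  (∀ x, 0 ≤ v x) ∧ LocallyIntegrable v

/-- Weighted `L^p` (quasi)norm `(∫ |f|^p v)^{1/p}`, valued in `ℝ≥0∞`. -/
def wNorm {n : ℕ} (p : ℝ) (v f : Euc n → ℝ) : ℝ≥0∞ :=
  (∫⁻ x, ENNReal.ofReal (|f x| ^ p * v x)) ^ (1 / p)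

/-- Weighted `L^p` norm of an `ℝ≥0∞`-valued function. -/
def wNormE {n : ℕ} (p : ℝ) (v : Euc n → ℝ) (F : Euc n → ℝ≥0∞) : ℝ≥0∞ :=
  (∫⁻ x, F x ^ p * ENNReal.ofReal (v x)) ^ (1 / p)

/-- The bilinear fractional integral operator `BI_α`. -/
def BI (n : ℕ) (α : ℝ) (f g : Euc n → ℝ) (x : Euc n) : ℝ :=
  ∫ y, f (x - y) * g (x + y) / ‖y‖ ^ ((n : ℝ) - α)

/-- The bilinear fractional integral operator, `ℝ≥0∞`-valued version for
nonnegative functions. -/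
def BIpos (n : ℕ) (α : ℝ) (f g : Euc n → ℝ) (x : Euc n) : ℝ≥0∞ :=
  ∫⁻ y, ENNReal.ofReal (f (x - y)) * ENNReal.ofReal (g (x + y)) /
    ENNReal.ofReal (‖y‖ ^ ((n : ℝ) - α))

/-- The bilinear fractional maximal operator `BM_α`. -/
def BM (n : ℕ) (α : ℝ) (f g : Euc n → ℝ) (x : Euc n) : ℝ≥0∞ :=
  ⨆ (Q : Cube n) (_ : x ∈ Q.set),
    ENNReal.ofReal (Q.vol ^ (α / (n : ℝ) - 1)) *
      ∫⁻ y in {y : Euc n | ∀ i, |y i| ≤ Q.side}, ENNReal.ofReal |f (x - y) * g (x + y)|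

/-- The bi-sublinear fractional maximal operator `M^{r,s}_α`. -/
def Mrs (n : ℕ) (α r s : ℝ) (f g : Euc n → ℝ) (x : Euc n) : ℝ≥0∞ :=
  ⨆ (Q : Cube n) (_ : x ∈ Q.set),
    ENNReal.ofReal (Q.vol ^ (α / (n : ℝ))) *
      ((∫⁻ y in Q.set, ENNReal.ofReal (|f y| ^ r)) / ENNReal.ofReal Q.vol) ^ (1 / r) *
      ((∫⁻ y in Q.set, ENNReal.ofReal (|g y| ^ s)) / ENNReal.ofReal Q.vol) ^ (1 / s)

/-- `M^{r,s}_α` restricted to a family of cubes `𝒟`. -/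
def MrsD (n : ℕ) (α r s : ℝ) (𝒟 : Set (Cube n)) (f g : Euc n → ℝ) (x : Euc n) : ℝ≥0∞ :=
  ⨆ (Q : Cube n) (_ : Q ∈ 𝒟) (_ : x ∈ Q.set),
    ENNReal.ofReal (Q.vol ^ (α / (n : ℝ))) *
      ((∫⁻ y in Q.set, ENNReal.ofReal (|f y| ^ r)) / ENNReal.ofReal Q.vol) ^ (1 / r) *
      ((∫⁻ y in Q.set, ENNReal.ofReal (|g y| ^ s)) / ENNReal.ofReal Q.vol) ^ (1 / s)

/-- Conjugate exponent `r' = r/(r-1)`. -/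
def conjExp (r : ℝ) : ℝ := r / (r - 1)

/-- A Young function: convex, continuous, strictly increasing on `[0,∞)`,
vanishing at `0`, and superlinear at infinity. -/
structure IsYoung (Φ : ℝ → ℝ) : Prop where
  convexOn : ConvexOn ℝ (Ici 0) Φ
  continuousOn : ContinuousOn Φ (Ici 0)
  strictMonoOn : StrictMonoOn Φ (Ici 0)
  map_zero : Φ 0 = 0
  tendsto_div_atTop : Tendsto (fun t => Φ t / t) atTop atTop

/-- The `B_p` integrability condition for a Young function. -/
def BCond (p : ℝ) (Φ : ℝ → ℝ) : Prop :=
  ∃ c > (0 : ℝ), IntegrableOn (fun t => Φ t / t ^ (p + 1)) (Ioi c)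

/-- The `B_{p,q}` integrability condition for a Young function. -/
def BCond2 (p q : ℝ) (Φ : ℝ → ℝ) : Prop :=
  ∃ c > (0 : ℝ), IntegrableOn (fun t => Φ t ^ (q / p) / t ^ (q + 1)) (Ioi c)

/-- `g` is the inverse of `f` on `[0,∞)`. -/
def InvPairOn (f g : ℝ → ℝ) : Prop :=
  (∀ t ∈ Ici (0 : ℝ), g (f t) = t) ∧ (∀ t ∈ Ici (0 : ℝ), f (g t) = t)

/-- The class `𝒴_{1/a, B}`: Young functions `φ` such that `t ↦ t^a / φ⁻¹(t)`
is the inverse of a Young function satisfying the condition `B`. -/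
def YClass (a : ℝ) (B : (ℝ → ℝ) → Prop) (φ : ℝ → ℝ) : Prop :=
  IsYoung φ ∧ ∃ φinv ψ ψinv : ℝ → ℝ, InvPairOn φ φinv ∧ InvPairOn ψ ψinv ∧
    IsYoung ψ ∧ B ψ ∧ ∀ t ∈ Ici (0 : ℝ), ψinv t = t ^ a / φinv t

/-- The class `𝒴^k_{1/a, B}`: Young functions `φ` such that
`t ↦ t^a / (φ⁻¹(t) · log(1+t)^k)` is the inverse of a Young function
satisfying the condition `B`. -/
def YClassLog (a : ℝ) (k : ℕ) (B : (ℝ → ℝ) → Prop) (φ : ℝ → ℝ) : Prop :=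
  IsYoung φ ∧ ∃ φinv ψ ψinv : ℝ → ℝ, InvPairOn φ φinv ∧ InvPairOn ψ ψinv ∧
    IsYoung ψ ∧ B ψ ∧
    ∀ t ∈ Ici (0 : ℝ), ψinv t = t ^ a / (φinv t * Real.log (1 + t) ^ k)

/-- The Orlicz average `‖f‖_{Φ,Q}` of `f` over the cube `Q`. -/
def orliczAvg {n : ℕ} (Φ : ℝ → ℝ) (Q : Cube n) (f : Euc n → ℝ) : ℝ :=
  sInf {lam : ℝ | 0 < lam ∧ (∫ x in Q.set, Φ (|f x| / lam)) / Q.vol ≤ 1}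

/-- The normalized `L^r` average `‖f‖_{L^r,Q}` over a cube. -/
def lrAvg {n : ℕ} (r : ℝ) (Q : Cube n) (f : Euc n → ℝ) : ℝ :=
  ((∫ x in Q.set, |f x| ^ r) / Q.vol) ^ (1 / r)

/-- The bilinear `A_{[ρ₁,ρ₂],σ}` condition for a pair of weights. -/
def APair {n : ℕ} (ρ₁ ρ₂ σ : ℝ) (w₁ w₂ : Euc n → ℝ) : Prop :=
  ∃ C : ℝ, ∀ Q : Cube n,
    ((∫ x in Q.set, (w₁ x * w₂ x) ^ σ) / Q.vol) ^ (1 / σ) *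
      ((∫ x in Q.set, w₁ x ^ (-conjExp ρ₁)) / Q.vol) ^ (1 / conjExp ρ₁) *
      ((∫ x in Q.set, w₂ x ^ (-conjExp ρ₂)) / Q.vol) ^ (1 / conjExp ρ₂) ≤ C

/-- The Muckenhoupt `A_ρ` condition. -/
def MuckAp (n : ℕ) (ρ : ℝ) (w : Euc n → ℝ) : Prop :=
  ∃ C : ℝ, ∀ Q : Cube n,
    ((∫ x in Q.set, w x) / Q.vol) *
      ((∫ x in Q.set, w x ^ (-(1 / (ρ - 1)))) / Q.vol) ^ (ρ - 1) ≤ C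

/-- The `BMO` seminorm, valued in `ℝ≥0∞`. -/
def bmoNorm (n : ℕ) (b : Euc n → ℝ) : ℝ≥0∞ :=
  ⨆ Q : Cube n,
    (∫⁻ x in Q.set, ENNReal.ofReal |b x - (∫ y in Q.set, b y) / Q.vol|) /
      ENNReal.ofReal Q.vol

/-- A dyadic grid: a countable collection of cubes of dyadic side lengths such
that the cubes of a fixed side length partition `ℝⁿ` and any two cubes are
either disjoint or nested. -/
def IsDyadicGrid {n : ℕ} (𝒟 : Set (Cube n)) : Prop :=
  𝒟.Countable ∧
  (∀ Q ∈ 𝒟, ∃ k : ℤ, Q.side = (2 : ℝ) ^ k) ∧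
  (∀ k : ℤ, ∀ x : Euc n, ∃! Q : Cube n, Q ∈ 𝒟 ∧ Q.side = (2 : ℝ) ^ k ∧ x ∈ Q.set) ∧
  ∀ Q ∈ 𝒟, ∀ P ∈ 𝒟, Q.set ∩ P.set = ∅ ∨ Q.set ⊆ P.set ∨ P.set ⊆ Q.set

/-- A sparse family of cubes. -/
def IsSparse {n : ℕ} (𝒮 : Set (Cube n)) : Prop :=
  ∃ E : Cube n → Set (Euc n),
    (∀ Q ∈ 𝒮, E Q ⊆ Q.set ∧ ENNReal.ofReal Q.vol ≤ 2 * volume (E Q)) ∧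
    𝒮.Pairwise fun Q P => Disjoint (E Q) (E P)

/-- The iterated commutator `[b⃗, BI_α]_{β⃗}`, where the value `0 : Fin 2`
denotes a first-component commutator and `1 : Fin 2` a second-component one;
`b (Fin.last N)` is the outermost commutator. -/
def iterComm (n : ℕ) (α : ℝ) : (N : ℕ) → (Fin N → Euc n → ℝ) → (Fin N → Fin 2) →
    (Euc n → ℝ) → (Euc n → ℝ) → Euc n → ℝ
  | 0, _, _, f, g => BI n α f g
  | N + 1, b, β, f, g => fun x =>
      b (Fin.last N) x *
          iterComm n α N (fun i => b i.castSucc) (fun i => β i.castSucc) f g x -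
        (if β (Fin.last N) = 0 then
          iterComm n α N (fun i => b i.castSucc) (fun i => β i.castSucc)
            (fun y => b (Fin.last N) y * f y) g x
        else
          iterComm n α N (fun i => b i.castSucc) (fun i => β i.castSucc) f
            (fun y => b (Fin.last N) y * g y) x)

/-- The shifted dyadic grid `𝒟^t`. -/
def shiftedGrid (n : ℕ) (t : Fin n → ℝ) : Set (Cube n) :=
  {Q | ∃ (k : ℤ) (m : Fin n → ℤ),
    Q.side = (2 : ℝ) ^ (-k) ∧
    ∀ i, Q.corner i = (2 : ℝ) ^ (-k) * ((m i : ℝ) + (-1 : ℝ) ^ k * t i)}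

/-- The weight factor in the two-weight characterization for `M^{r,s}_α`,
with the convention for the endpoint `ρ = r`. -/
def vFactor {n : ℕ} (r ρ : ℝ) (Q : Cube n) (v : Euc n → ℝ) : ℝ :=
  if r < ρ then ((∫ x in Q.set, v x ^ (-(r / (ρ - r)))) / Q.vol) ^ ((ρ - r) / (r * ρ))
  else (essInf v (volume.restrict Q.set))⁻¹ ^ (1 / ρ)


/-!
A cube `Q` selected at level `k` has a dyadic parent `Q̂`, of measure `2ⁿ|Q|`, on which the
product of the two Orlicz averages is at most `4^((n+2)k)`. A cube selected at level `k + 1`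
that meets `Q` lies inside `Q`, and as its product exceeds `4^(n+2)` times that on `Q̂`, one
of its two averages exceeds `2^(n+2)` times the corresponding average on `Q̂`. Since
`Φ(t/c) ≤ Φ(t)/c` for `c ≥ 1`, disjoint subcubes of `Q̂` on which an Orlicz average exceeds
`c` times its value on `Q̂` cover at most `|Q̂|/c = |Q|/4`; the two families together cover at
most `|Q|/2`. The sets `E_{k,j}` are disjoint because every cube selected at a level `k' > k`
lies in a cube selected at level `k + 1`: maximal cubes exist because the averages of bounded,
compactly supported functions become small on large cubes.
-/
attribute [ext] Cube

namespace Cube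

variable {n : ℕ}

theorem vol_pos (Q : Cube n) : 0 < Q.vol := pow_pos Q.side_pos n

theorem corner_mem_set (Q : Cube n) : WithLp.toLp 2 Q.corner ∈ Q.set := fun _ =>
  ⟨le_rfl, lt_add_of_pos_right _ Q.side_pos⟩

theorem set_eq_preimage (Q : Cube n) :
    Q.set = (MeasurableEquiv.toLp 2 (Fin n → ℝ)).symm ⁻¹'
      univ.pi fun i => Ico (Q.corner i) (Q.corner i + Q.side) := by
  ext x
  simp only [mem_preimage, mem_univ_pi, mem_Ico]
  rfl

theorem measurableSet_set (Q : Cube n) : MeasurableSet Q.set := by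
  rw [set_eq_preimage]
  exact (MeasurableEquiv.toLp 2 (Fin n → ℝ)).symm.measurable
    (MeasurableSet.univ_pi fun _ => measurableSet_Ico)

theorem volume_set (Q : Cube n) : volume Q.set = ENNReal.ofReal Q.vol := by
  rw [set_eq_preimage,
    (EuclideanSpace.volume_preserving_symm_measurableEquiv_toLp (Fin n)).measure_preimage
      (MeasurableSet.univ_pi fun _ => measurableSet_Ico).nullMeasurableSet,
    volume_pi_pi]
  simp [Cube.vol, ENNReal.ofReal_pow Q.side_pos.le]

theorem volume_set_ne_top (Q : Cube n) : volume Q.set ≠ ∞ := by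
  simp [volume_set]

theorem Ico_subset_Ico_of_subset {P R : Cube n} (h : P.set ⊆ R.set) (i : Fin n) :
    Ico (P.corner i) (P.corner i + P.side) ⊆ Ico (R.corner i) (R.corner i + R.side) := by
  intro y hy
  have hx : WithLp.toLp 2 (Function.update P.corner i y) ∈ P.set := by
    intro j
    rcases eq_or_ne j i with rfl | hj
    · simpa using hy
    · simpa [hj] using P.corner_mem_set j
  simpa using h hx i

theorem side_le_side (hn : 0 < n) {P R : Cube n} (h : P.set ⊆ R.set) : P.side ≤ R.side := by
  have := (Ico_subset_Ico_iff (lt_add_of_pos_right _ P.side_pos)).1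
    (Ico_subset_Ico_of_subset h ⟨0, hn⟩)
  linarith

theorem vol_le_vol (hn : 0 < n) {P R : Cube n} (h : P.set ⊆ R.set) : P.vol ≤ R.vol :=
  pow_le_pow_left₀ P.side_pos.le (side_le_side hn h) n

theorem eq_of_subset_of_side_le (hn : 0 < n) {P R : Cube n} (h : P.set ⊆ R.set)
    (hs : R.side ≤ P.side) : R = P := by
  have hside : R.side = P.side := le_antisymm hs (side_le_side hn h)
  refine Cube.ext (funext fun i => ?_) hside
  have := (Ico_subset_Ico_iff (lt_add_of_pos_right _ P.side_pos)).1
    (Ico_subset_Ico_of_subset h i)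
  linarith

end Cube

namespace IsDyadicGrid

variable {n : ℕ} {𝒟 : Set (Cube n)}

theorem subset_or_subset_of_not_disjoint {P R : Cube n} (h𝒟 : IsDyadicGrid 𝒟) (hP : P ∈ 𝒟)
    (hR : R ∈ 𝒟) (h : ¬Disjoint P.set R.set) : P.set ⊆ R.set ∨ R.set ⊆ P.set := by
  rcases h𝒟.2.2.2 P hP R hR with h' | h' | h'
  · exact absurd (disjoint_iff_inter_eq_empty.2 h') h
  · exact .inl h'
  · exact .inr h'

theorem exists_parent (hn : 0 < n) (h𝒟 : IsDyadicGrid 𝒟) {Q : Cube n} (hQ : Q ∈ 𝒟) :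
    ∃ R ∈ 𝒟, Q.set ⊆ R.set ∧ R.side = 2 * Q.side := by
  obtain ⟨j, hj⟩ := h𝒟.2.1 Q hQ
  obtain ⟨R, ⟨hR, hRs, hxR⟩, -⟩ := h𝒟.2.2.1 (j + 1) (WithLp.toLp 2 Q.corner)
  have hRs' : R.side = 2 * Q.side := by rw [hRs, hj, zpow_add_one₀ two_ne_zero, mul_comm]
  refine ⟨R, hR, ?_, hRs'⟩
  rcases h𝒟.subset_or_subset_of_not_disjoint hQ hR
    (not_disjoint_iff.2 ⟨_, Q.corner_mem_set, hxR⟩) with h | h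
  · exact h
  · have := Cube.side_le_side hn h
    linarith [Q.side_pos]

end IsDyadicGrid

section MaximalCubes

variable {n : ℕ} {𝒟 : Set (Cube n)} {a : Cube n → ℝ}

def maximalCubes (𝒟 : Set (Cube n)) (a : Cube n → ℝ) (t : ℝ) : Set (Cube n) :=
  {Q | Q ∈ 𝒟 ∧ t < a Q ∧ ∀ R ∈ 𝒟, t < a R → Q.set ⊆ R.set → R = Q}

theorem pairwiseDisjoint_maximalCubes (h𝒟 : IsDyadicGrid 𝒟) (t : ℝ) :
    (maximalCubes 𝒟 a t).PairwiseDisjoint Cube.set := by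
  rintro P ⟨hP, hPt, hPmax⟩ Q ⟨hQ, hQt, hQmax⟩ hPQ
  by_contra h
  rcases h𝒟.subset_or_subset_of_not_disjoint hP hQ h with h' | h'
  · exact hPQ (hPmax Q hQ hQt h').symm
  · exact hPQ (hQmax P hP hPt h')

theorem subset_of_mem_maximalCubes (h𝒟 : IsDyadicGrid 𝒟) {t t' : ℝ} (htt' : t ≤ t')
    {P Q : Cube n} (hP : P ∈ maximalCubes 𝒟 a t') (hQ : Q ∈ maximalCubes 𝒟 a t)
    (h : ¬Disjoint P.set Q.set) : P.set ⊆ Q.set := by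
  rcases h𝒟.subset_or_subset_of_not_disjoint hP.1 hQ.1 h with h' | h'
  · exact h'
  · rw [hQ.2.2 P hP.1 (htt'.trans_lt hP.2.1) h']

theorem exists_parent_of_mem_maximalCubes (hn : 0 < n) (h𝒟 : IsDyadicGrid 𝒟) {t : ℝ}
    {Q : Cube n} (hQ : Q ∈ maximalCubes 𝒟 a t) :
    ∃ R, Q.set ⊆ R.set ∧ R.vol = 2 ^ n * Q.vol ∧ a R ≤ t := by
  obtain ⟨R, hR, hQR, hRs⟩ := h𝒟.exists_parent hn hQ.1
  refine ⟨R, hQR, by rw [Cube.vol, Cube.vol, hRs, mul_pow], le_of_not_gt fun hRt => ?_⟩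
  have := hQ.2.2 R hR hRt hQR
  rw [this] at hRs
  linarith [Q.side_pos]

theorem exists_mem_maximalCubes_superset (hn : 0 < n) (h𝒟 : IsDyadicGrid 𝒟) {t : ℝ}
    (hdecay : ∃ V, ∀ R ∈ 𝒟, V ≤ R.vol → a R ≤ t) {Q₀ : Cube n} (hQ₀ : Q₀ ∈ 𝒟)
    (ht : t < a Q₀) : ∃ P ∈ maximalCubes 𝒟 a t, Q₀.set ⊆ P.set := by
  obtain ⟨V, hV⟩ := hdecay
  obtain ⟨b, hb⟩ := pow_unbounded_of_one_lt V one_lt_two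
  have hbdd : ∀ j : ℤ, (∃ R ∈ 𝒟, R.side = 2 ^ j ∧ Q₀.set ⊆ R.set ∧ t < a R) → j ≤ b := by
    rintro j ⟨R, hR, hRs, -, hRt⟩
    by_contra! hj
    have h2j : (2 : ℝ) ^ b ≤ 2 ^ j := by
      rw [← zpow_natCast]; exact zpow_le_zpow_right₀ one_le_two hj.le
    have hVR : V ≤ R.vol := calc
      V ≤ 2 ^ j := hb.le.trans h2j
      _ ≤ (2 ^ j) ^ n := le_self_pow₀ ((one_le_pow₀ one_le_two).trans h2j) hn.ne'
      _ = R.vol := by rw [Cube.vol, hRs]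
    exact (hV R hR hVR).not_gt hRt
  obtain ⟨j₀, hj₀⟩ := h𝒟.2.1 Q₀ hQ₀
  obtain ⟨J, ⟨P, hP, hPs, hQ₀P, hPt⟩, hJ⟩ :=
    Int.exists_greatest_of_bdd ⟨b, hbdd⟩ ⟨j₀, Q₀, hQ₀, hj₀, subset_rfl, ht⟩
  refine ⟨P, ⟨hP, hPt, fun R hR hRt hPR => ?_⟩, hQ₀P⟩
  obtain ⟨m, hm⟩ := h𝒟.2.1 R hR
  refine Cube.eq_of_subset_of_side_le hn hPR ?_
  rw [hm, hPs]
  exact zpow_le_zpow_right₀ one_le_two (hJ m ⟨R, hR, hm, hQ₀P.trans hPR, hRt⟩)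

theorem disjoint_diff_iUnion_maximalCubes (hn : 0 < n) (h𝒟 : IsDyadicGrid 𝒟) {t : ℤ → ℝ}
    (ht : Monotone t) (hdecay : ∀ k, ∃ V, ∀ R ∈ 𝒟, V ≤ R.vol → a R ≤ t k) {k k' : ℤ}
    {Q Q' : Cube n} (hQ : Q ∈ maximalCubes 𝒟 a (t k)) (hQ' : Q' ∈ maximalCubes 𝒟 a (t k'))
    (hne : (k, Q) ≠ (k', Q')) :
    Disjoint (Q.set \ ⋃ P ∈ maximalCubes 𝒟 a (t (k + 1)), P.set)
      (Q'.set \ ⋃ P ∈ maximalCubes 𝒟 a (t (k' + 1)), P.set) := by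
  wlog hkk' : k ≤ k' generalizing k k' Q Q'
  · exact (this hQ' hQ hne.symm (le_of_not_ge hkk')).symm
  rcases hkk'.eq_or_lt with rfl | hlt
  · have hQQ' : Q ≠ Q' := fun h => hne (h ▸ rfl)
    exact (pairwiseDisjoint_maximalCubes h𝒟 _ hQ hQ' hQQ').mono sdiff_subset sdiff_subset
  · obtain ⟨P, hP, hQ'P⟩ := exists_mem_maximalCubes_superset hn h𝒟 (hdecay (k + 1)) hQ'.1
      ((ht (Int.add_one_le_iff.2 hlt)).trans_lt hQ'.2.1)
    exact disjoint_sdiff_left.mono_right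
      (sdiff_subset.trans (hQ'P.trans (subset_biUnion_of_mem (u := Cube.set) hP)))

end MaximalCubes

theorem isSparse_iUnion {n : ℕ} {S : ℤ → Set (Cube n)} (E : ℤ → Cube n → Set (Euc n))
    (hE : ∀ k, ∀ Q ∈ S k, E k Q ⊆ Q.set ∧ ENNReal.ofReal Q.vol ≤ 2 * volume (E k Q))
    (hdisj : ∀ k k', ∀ Q ∈ S k, ∀ Q' ∈ S k', (k, Q) ≠ (k', Q') → Disjoint (E k Q) (E k' Q')) :
    IsSparse (⋃ k, S k) := by
  classical
  let level : Cube n → ℤ := fun Q => if h : ∃ k, Q ∈ S k then h.choose else 0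
  have hlevel : ∀ Q ∈ ⋃ k, S k, Q ∈ S (level Q) := fun Q hQ => by
    have h : ∃ k, Q ∈ S k := mem_iUnion.1 hQ
    simpa only [level, dif_pos h] using h.choose_spec
  exact ⟨fun Q => E (level Q) Q, fun Q hQ => hE _ Q (hlevel Q hQ),
    fun Q hQ Q' hQ' hne =>
      hdisj _ _ Q (hlevel Q hQ) Q' (hlevel Q' hQ') fun h => hne (congrArg Prod.snd h)⟩

theorem le_two_mul_measure_diff {α : Type*} [MeasurableSpace α] {μ : Measure α} {s u : Set α}
    (hs : μ s ≠ ∞) (h : μ (s ∩ u) ≤ μ s / 2) : μ s ≤ 2 * μ (s \ u) := by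
  have halves : μ s / 2 + μ s / 2 ≤ μ s / 2 + μ (s \ u) := by
    rw [ENNReal.add_halves]
    exact (measure_le_inter_add_sdiff μ s u).trans (add_le_add_left h _)
  calc μ s = 2 * (μ s / 2) := (ENNReal.mul_div_cancel two_ne_zero ofNat_ne_top).symm
    _ ≤ 2 * μ (s \ u) := by
      gcongr
      exact (ENNReal.add_le_add_iff_left (ENNReal.div_ne_top hs two_ne_zero)).1 halves

/-- The properties of Young functions used below; `div_le` follows from convexity and
`Φ 0 = 0`. -/
structure IsOrliczFunction (Φ : ℝ → ℝ) : Prop where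
  map_zero : Φ 0 = 0
  monotoneOn : MonotoneOn Φ (Ici 0)
  continuousOn : ContinuousOn Φ (Ici 0)
  div_le : ∀ t, 0 ≤ t → ∀ c, 1 ≤ c → Φ (t / c) ≤ Φ t / c

theorem isOrliczFunction_rpow_mul_log {r s : ℝ} (hr : 1 ≤ r) (hs : 0 ≤ s) :
    IsOrliczFunction fun t => t ^ r * Real.log (1 + t) ^ s where
  map_zero := by simp [Real.zero_rpow (by linarith : r ≠ 0)]
  monotoneOn a (ha : 0 ≤ a) b _ hab := by
    have hlog : Real.log (1 + a) ≤ Real.log (1 + b) := Real.log_le_log (by linarith) (by linarith)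
    exact mul_le_mul (Real.rpow_le_rpow ha hab (by linarith))
      (Real.rpow_le_rpow (Real.log_nonneg (by linarith)) hlog hs)
      (Real.rpow_nonneg (Real.log_nonneg (by linarith)) s) (Real.rpow_nonneg (ha.trans hab) r)
  continuousOn :=
    (continuousOn_id.rpow_const fun _ _ => .inr (by linarith)).mul
      (((continuousOn_const.add continuousOn_id).log fun t (ht : 0 ≤ t) => by
        dsimp; linarith).rpow_const fun _ _ => .inr hs)
  div_le t ht c hc := by
    have hc0 : 0 < c := by linarith
    have htc : t / c ≤ t := div_le_self ht hc
    have := Real.log_nonneg (by linarith [div_nonneg ht hc0.le] : (1 : ℝ) ≤ 1 + t / c)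
    have hcr : c ≤ c ^ r := by
      simpa using Real.rpow_le_rpow_of_exponent_le hc hr
    calc (t / c) ^ r * Real.log (1 + t / c) ^ s
        = t ^ r / c ^ r * Real.log (1 + t / c) ^ s := by rw [Real.div_rpow ht hc0.le]
      _ ≤ t ^ r / c * Real.log (1 + t) ^ s := by gcongr
      _ = t ^ r * Real.log (1 + t) ^ s / c := by ring

namespace IsOrliczFunction

variable {Φ : ℝ → ℝ} {α : Type*} {f : α → ℝ} {C lam : ℝ}

theorem nonneg (hΦ : IsOrliczFunction Φ) {t : ℝ} (ht : 0 ≤ t) : 0 ≤ Φ t :=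
  hΦ.map_zero ▸ hΦ.monotoneOn self_mem_Ici ht ht

theorem le_of_abs_le (hΦ : IsOrliczFunction Φ) (hC : ∀ x, |f x| ≤ C) (hlam : 0 ≤ lam) (x : α) :
    Φ (|f x| / lam) ≤ Φ (C / lam) :=
  hΦ.monotoneOn (div_nonneg (abs_nonneg _) hlam) (div_nonneg ((abs_nonneg _).trans (hC x)) hlam)
    (div_le_div_of_nonneg_right (hC x) hlam)

variable [MeasurableSpace α] {μ : Measure α}

theorem measurable_comp (hΦ : IsOrliczFunction Φ) (hf : Measurable f) (hlam : 0 ≤ lam) :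
    Measurable fun x => Φ (|f x| / lam) := by
  have hcont : Continuous fun u => Φ |u| :=
    hΦ.continuousOn.comp_continuous continuous_abs fun u => abs_nonneg u
  convert hcont.measurable.comp (hf.div_const lam) using 2 with x
  simp [abs_div, abs_of_nonneg hlam]

theorem integrableOn (hΦ : IsOrliczFunction Φ) (hf : Measurable f) (hC : ∀ x, |f x| ≤ C)
    {s : Set α} (hs : μ s ≠ ∞) (hlam : 0 ≤ lam) :
    IntegrableOn (fun x => Φ (|f x| / lam)) s μ := by
  refine Integrable.mono' (integrableOn_const (C := Φ (C / lam)) hs)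
    (hΦ.measurable_comp hf hlam).aestronglyMeasurable
    (.of_forall fun x => ?_)
  rw [Real.norm_of_nonneg (hΦ.nonneg (by positivity))]
  exact hΦ.le_of_abs_le hC hlam x

theorem ofReal_setIntegral (hΦ : IsOrliczFunction Φ) (hf : Measurable f) (hC : ∀ x, |f x| ≤ C)
    {s : Set α} (hs : μ s ≠ ∞) (hlam : 0 ≤ lam) :
    ENNReal.ofReal (∫ x in s, Φ (|f x| / lam) ∂μ) =
      ∫⁻ x in s, ENNReal.ofReal (Φ (|f x| / lam)) ∂μ :=
  ofReal_integral_eq_lintegral_ofReal (hΦ.integrableOn hf hC hs hlam)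
    (.of_forall fun _ => hΦ.nonneg (by positivity))

theorem setIntegral_div_mul_le (hΦ : IsOrliczFunction Φ) (hf : Measurable f)
    (hC : ∀ x, |f x| ≤ C) {s t : Set α} (hst : s ⊆ t) (ht : μ t ≠ ∞) {c : ℝ} (hc : 1 ≤ c)
    (hlam : 0 ≤ lam) :
    ∫ x in s, Φ (|f x| / (c * lam)) ∂μ ≤ (∫ x in t, Φ (|f x| / lam) ∂μ) / c := by
  have hs : μ s ≠ ∞ := ne_top_of_le_ne_top ht (measure_mono hst)
  calc ∫ x in s, Φ (|f x| / (c * lam)) ∂μ ≤ ∫ x in s, Φ (|f x| / lam) / c ∂μ := by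
        refine integral_mono (hΦ.integrableOn hf hC hs (by positivity))
          ((hΦ.integrableOn hf hC hs hlam).div_const c) fun x => ?_
        rw [mul_comm, ← div_div]
        exact hΦ.div_le _ (by positivity) c hc
    _ = (∫ x in s, Φ (|f x| / lam) ∂μ) / c := integral_div c _
    _ ≤ (∫ x in t, Φ (|f x| / lam) ∂μ) / c :=
        div_le_div_of_nonneg_right (setIntegral_mono_set (hΦ.integrableOn hf hC ht hlam)
          (.of_forall fun _ => hΦ.nonneg (by positivity)) hst.eventuallyLE) (by linarith)

end IsOrliczFunction

section OrliczAverage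

variable {n : ℕ} {Φ : ℝ → ℝ} {f : Euc n → ℝ} {C lam : ℝ}

theorem orliczAvg_nonneg (Φ : ℝ → ℝ) (Q : Cube n) (f : Euc n → ℝ) : 0 ≤ orliczAvg Φ Q f :=
  Real.sInf_nonneg fun _ h => h.1.le

theorem orliczAvg_le_of_setIntegral_le {Q : Cube n} (hlam : 0 < lam)
    (h : ∫ x in Q.set, Φ (|f x| / lam) ≤ Q.vol) : orliczAvg Φ Q f ≤ lam :=
  csInf_le ⟨0, fun _ h => h.1.le⟩ ⟨hlam, (div_le_one Q.vol_pos).2 h⟩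

theorem vol_lt_setIntegral_of_lt_orliczAvg {Q : Cube n} (hlam : 0 < lam)
    (h : lam < orliczAvg Φ Q f) : Q.vol < ∫ x in Q.set, Φ (|f x| / lam) :=
  lt_of_not_ge fun h' => (orliczAvg_le_of_setIntegral_le hlam h').not_gt h

theorem IsOrliczFunction.setIntegral_le_mul_vol (hΦ : IsOrliczFunction Φ) (hf : Measurable f)
    (hC : ∀ x, |f x| ≤ C) (Q : Cube n) (hlam : 0 ≤ lam) :
    ∫ x in Q.set, Φ (|f x| / lam) ≤ Φ (C / lam) * Q.vol := by
  calc ∫ x in Q.set, Φ (|f x| / lam) ≤ ∫ _ in Q.set, Φ (C / lam) :=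
        integral_mono (hΦ.integrableOn hf hC Q.volume_set_ne_top hlam)
          (integrableOn_const Q.volume_set_ne_top) (hΦ.le_of_abs_le hC hlam)
    _ = Φ (C / lam) * Q.vol := by
        rw [setIntegral_const, measureReal_def, Q.volume_set, ENNReal.toReal_ofReal Q.vol_pos.le,
          smul_eq_mul, mul_comm]

theorem IsOrliczFunction.exists_setIntegral_le_vol (hΦ : IsOrliczFunction Φ) (hf : Measurable f)
    (hC : ∀ x, |f x| ≤ C) (Q : Cube n) :
    ∃ lam, 0 < lam ∧ ∫ x in Q.set, Φ (|f x| / lam) ≤ Q.vol := by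
  have hC0 : 0 ≤ C := (abs_nonneg _).trans (hC 0)
  set c := max 1 (Φ C)
  have hc : 1 ≤ c := le_max_left _ _
  refine ⟨c, by positivity, (hΦ.setIntegral_le_mul_vol hf hC Q (by positivity)).trans ?_⟩
  have : Φ (C / c) ≤ 1 :=
    (hΦ.div_le C hC0 c hc).trans ((div_le_one (by positivity)).2 (le_max_right _ _))
  nlinarith [Q.vol_pos]

theorem IsOrliczFunction.setIntegral_le_vol_of_orliczAvg_lt (hΦ : IsOrliczFunction Φ)
    (hf : Measurable f) (hC : ∀ x, |f x| ≤ C) {Q : Cube n} (h : orliczAvg Φ Q f < lam) :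
    ∫ x in Q.set, Φ (|f x| / lam) ≤ Q.vol := by
  obtain ⟨lam₀, hlam₀, hint₀⟩ := hΦ.exists_setIntegral_le_vol hf hC Q
  obtain ⟨lam', ⟨hlam', hint⟩, hlt⟩ :=
    exists_lt_of_csInf_lt (by exact ⟨lam₀, hlam₀, (div_le_one Q.vol_pos).2 hint₀⟩) h
  refine le_trans (integral_mono (hΦ.integrableOn hf hC Q.volume_set_ne_top (by linarith))
    (hΦ.integrableOn hf hC Q.volume_set_ne_top hlam'.le) fun x => ?_)
    ((div_le_one Q.vol_pos).1 hint)
  exact hΦ.monotoneOn (mem_Ici.2 (div_nonneg (abs_nonneg _) (by linarith)))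
    (mem_Ici.2 (div_nonneg (abs_nonneg _) hlam'.le))
    (div_le_div_of_nonneg_left (abs_nonneg _) hlam' hlt.le)

theorem IsOrliczFunction.setIntegral_orliczAvg_le (hΦ : IsOrliczFunction Φ) (hf : Measurable f)
    (hC : ∀ x, |f x| ≤ C) {Q : Cube n} (hA : 0 < orliczAvg Φ Q f) :
    ∫ x in Q.set, Φ (|f x| / orliczAvg Φ Q f) ≤ Q.vol := by
  set A := orliczAvg Φ Q f
  have hnear : ∀ᶠ lam in nhds A, A / 2 < lam := lt_mem_nhds (half_lt_self hA)
  have hcont : ContinuousAt (fun lam => ∫ x in Q.set, Φ (|f x| / lam)) A := by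
    refine continuousAt_of_dominated (bound := fun _ => Φ (C / (A / 2)))
      (hnear.mono fun lam hlam => (hΦ.measurable_comp hf (by linarith)).aestronglyMeasurable)
      (hnear.mono fun lam hlam => Eventually.of_forall fun x => ?_)
      (integrableOn_const Q.volume_set_ne_top) (Eventually.of_forall fun x => ?_)
    · have hC0 : 0 ≤ C := (abs_nonneg _).trans (hC x)
      have hfx : 0 ≤ |f x| / lam := div_nonneg (abs_nonneg _) (by linarith)
      rw [Real.norm_of_nonneg (hΦ.nonneg hfx)]
      exact hΦ.monotoneOn hfx (div_nonneg hC0 (half_pos hA).le)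
        (div_le_div₀ hC0 (hC x) (half_pos hA) hlam.le)
    · exact ((hΦ.continuousOn.comp
        (continuousOn_const.div continuousOn_id fun _ h => (mem_Ioi.1 h).ne')
        fun lam (h : 0 < lam) => div_nonneg (abs_nonneg (f x)) h.le).continuousAt
        (Ioi_mem_nhds hA))
  exact le_of_tendsto (hcont.tendsto.mono_left (nhdsWithin_le_nhds (s := Ioi A)))
    (eventually_nhdsWithin_of_forall fun lam (h : A < lam) =>
      hΦ.setIntegral_le_vol_of_orliczAvg_lt hf hC h)

theorem IsOrliczFunction.orliczAvg_le_mul_of_subset (hn : 0 < n) (hΦ : IsOrliczFunction Φ)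
    (hf : Measurable f) (hC : ∀ x, |f x| ≤ C) {P R : Cube n} (h : P.set ⊆ R.set) :
    orliczAvg Φ P f ≤ R.vol / P.vol * orliczAvg Φ R f := by
  set c := R.vol / P.vol
  have hc : 1 ≤ c := (one_le_div P.vol_pos).2 (Cube.vol_le_vol hn h)
  have key : ∀ lam, orliczAvg Φ R f < lam → orliczAvg Φ P f / c ≤ lam := fun lam hlam => by
    have hlam0 : 0 < lam := (orliczAvg_nonneg Φ R f).trans_lt hlam
    rw [div_le_iff₀ (by positivity), mul_comm]
    refine orliczAvg_le_of_setIntegral_le (by positivity) ?_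
    calc ∫ x in P.set, Φ (|f x| / (c * lam))
        ≤ (∫ x in R.set, Φ (|f x| / lam)) / c :=
          hΦ.setIntegral_div_mul_le hf hC h R.volume_set_ne_top hc hlam0.le
      _ ≤ R.vol / c := by gcongr; exact hΦ.setIntegral_le_vol_of_orliczAvg_lt hf hC hlam
      _ = P.vol := div_div_cancel₀ R.vol_pos.ne'
  have := le_of_forall_gt_imp_ge_of_dense key
  rwa [div_le_iff₀ (by positivity), mul_comm] at this

theorem IsOrliczFunction.exists_forall_orliczAvg_le (hΦ : IsOrliczFunction Φ) (hf : Measurable f)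
    (hC : ∀ x, |f x| ≤ C) (hfc : HasCompactSupport f) {δ : ℝ} (hδ : 0 < δ) :
    ∃ V, ∀ Q : Cube n, V ≤ Q.vol → orliczAvg Φ Q f ≤ δ := by
  have hint : Integrable fun x => Φ (|f x| / δ) := by
    refine (integrableOn_iff_integrable_of_support_subset fun x hx => subset_tsupport f ?_).1
      (hΦ.integrableOn hf hC hfc.measure_lt_top.ne hδ.le)
    intro hfx
    simp [hfx, hΦ.map_zero] at hx
  refine ⟨∫ x, Φ (|f x| / δ), fun Q hQ => orliczAvg_le_of_setIntegral_le hδ ?_⟩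
  exact (setIntegral_le_integral hint (.of_forall fun _ => hΦ.nonneg (by positivity))).trans hQ

theorem IsOrliczFunction.volume_biUnion_le_of_lt_orliczAvg (hn : 0 < n)
    (hΦ : IsOrliczFunction Φ) (hf : Measurable f) (hC : ∀ x, |f x| ≤ C) {R : Cube n}
    {𝒞 : Set (Cube n)} (h𝒞 : 𝒞.Countable) (hdisj : 𝒞.PairwiseDisjoint Cube.set)
    (hsub : ∀ P ∈ 𝒞, P.set ⊆ R.set) {c : ℝ} (hc : 1 ≤ c)
    (hlt : ∀ P ∈ 𝒞, c * orliczAvg Φ R f < orliczAvg Φ P f) :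
    volume (⋃ P ∈ 𝒞, P.set) ≤ ENNReal.ofReal (R.vol / c) := by
  rcases (orliczAvg_nonneg Φ R f).eq_or_lt with hA | hA
  · have h𝒞e : 𝒞 = ∅ := eq_empty_of_forall_notMem fun P hP => by
      have h₁ := hΦ.orliczAvg_le_mul_of_subset hn hf hC (hsub P hP)
      have h₂ := hlt P hP
      rw [← hA, mul_zero] at h₁ h₂
      linarith
    simp [h𝒞e]
  set A := orliczAvg Φ R f
  have hcA : 0 < c * A := by positivity
  calc volume (⋃ P ∈ 𝒞, P.set) ≤ ∑' P : 𝒞, volume (P : Cube n).set := measure_biUnion_le _ h𝒞 _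
    _ ≤ ∑' P : 𝒞, ∫⁻ x in (P : Cube n).set, ENNReal.ofReal (Φ (|f x| / (c * A))) := by
        refine ENNReal.tsum_le_tsum fun P => ?_
        rw [Cube.volume_set, ← hΦ.ofReal_setIntegral hf hC (P : Cube n).volume_set_ne_top hcA.le]
        exact ENNReal.ofReal_le_ofReal (vol_lt_setIntegral_of_lt_orliczAvg hcA (hlt P P.2)).le
    _ = ∫⁻ x in ⋃ P ∈ 𝒞, P.set, ENNReal.ofReal (Φ (|f x| / (c * A))) :=
        (lintegral_biUnion h𝒞 (fun P _ => P.measurableSet_set) hdisj _).symm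
    _ ≤ ∫⁻ x in R.set, ENNReal.ofReal (Φ (|f x| / (c * A))) :=
        lintegral_mono_set (iUnion₂_subset hsub)
    _ = ENNReal.ofReal (∫ x in R.set, Φ (|f x| / (c * A))) :=
        (hΦ.ofReal_setIntegral hf hC R.volume_set_ne_top hcA.le).symm
    _ ≤ ENNReal.ofReal (R.vol / c) := by
        refine ENNReal.ofReal_le_ofReal ?_
        calc ∫ x in R.set, Φ (|f x| / (c * A))
            ≤ (∫ x in R.set, Φ (|f x| / A)) / c :=
              hΦ.setIntegral_div_mul_le hf hC subset_rfl R.volume_set_ne_top hc hA.le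
          _ ≤ R.vol / c := by gcongr; exact hΦ.setIntegral_orliczAvg_le hf hC hA

end OrliczAverage

section Stopping

variable {n : ℕ} {𝒟 : Set (Cube n)} {Φ₁ Φ₂ : ℝ → ℝ} {f g : Euc n → ℝ} {C₁ C₂ : ℝ}

theorem exists_forall_orliczAvg_mul_le (hΦ₁ : IsOrliczFunction Φ₁) (hΦ₂ : IsOrliczFunction Φ₂)
    (hf : Measurable f) (hg : Measurable g) (hC₁ : ∀ x, |f x| ≤ C₁) (hC₂ : ∀ x, |g x| ≤ C₂)
    (hfc : HasCompactSupport f) (hgc : HasCompactSupport g) {t : ℝ} (ht : 0 < t) :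
    ∃ V, ∀ Q : Cube n, V ≤ Q.vol → orliczAvg Φ₁ Q f * orliczAvg Φ₂ Q g ≤ t := by
  obtain ⟨V₁, hV₁⟩ := hΦ₁.exists_forall_orliczAvg_le hf hC₁ hfc (Real.sqrt_pos.2 ht)
  obtain ⟨V₂, hV₂⟩ := hΦ₂.exists_forall_orliczAvg_le hg hC₂ hgc (Real.sqrt_pos.2 ht)
  refine ⟨max V₁ V₂, fun Q hQ => ?_⟩
  calc orliczAvg Φ₁ Q f * orliczAvg Φ₂ Q g ≤ √t * √t :=
        mul_le_mul (hV₁ Q (le_of_max_le_left hQ)) (hV₂ Q (le_of_max_le_right hQ))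
          (orliczAvg_nonneg _ _ _) (Real.sqrt_nonneg t)
    _ = t := Real.mul_self_sqrt ht.le

theorem volume_inter_iUnion_maximalCubes_le (hn : 0 < n) (h𝒟 : IsDyadicGrid 𝒟)
    (hΦ₁ : IsOrliczFunction Φ₁) (hΦ₂ : IsOrliczFunction Φ₂) (hf : Measurable f)
    (hg : Measurable g) (hC₁ : ∀ x, |f x| ≤ C₁) (hC₂ : ∀ x, |g x| ≤ C₂) {t : ℝ} (ht : 0 ≤ t)
    {Q : Cube n} (hQ : Q ∈ maximalCubes 𝒟 (fun P => orliczAvg Φ₁ P f * orliczAvg Φ₂ P g) t) :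
    volume (Q.set ∩ ⋃ P ∈ maximalCubes 𝒟 (fun P => orliczAvg Φ₁ P f * orliczAvg Φ₂ P g)
      ((2 ^ (n + 2)) ^ 2 * t), P.set) ≤ ENNReal.ofReal Q.vol / 2 := by
  set c : ℝ := 2 ^ (n + 2)
  set M := maximalCubes 𝒟 (fun P => orliczAvg Φ₁ P f * orliczAvg Φ₂ P g) (c ^ 2 * t)
  obtain ⟨R, hQR, hRvol, hRt⟩ := exists_parent_of_mem_maximalCubes hn h𝒟 hQ
  have hc : 1 ≤ c := one_le_pow₀ one_le_two
  have hRc : R.vol / c = Q.vol / 4 := by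
    rw [hRvol, show c = 2 ^ n * 4 by simp only [c, pow_add]; norm_num]
    field_simp
  set 𝒞₁ := {P | P ∈ M ∧ P.set ⊆ Q.set ∧ c * orliczAvg Φ₁ R f < orliczAvg Φ₁ P f}
  set 𝒞₂ := {P | P ∈ M ∧ P.set ⊆ Q.set ∧ c * orliczAvg Φ₂ R g < orliczAvg Φ₂ P g}
  have hcover : Q.set ∩ ⋃ P ∈ M, P.set ⊆ (⋃ P ∈ 𝒞₁, P.set) ∪ ⋃ P ∈ 𝒞₂, P.set := by
    rintro x ⟨hxQ, hxU⟩
    obtain ⟨P, hP, hxP⟩ := mem_iUnion₂.1 hxU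
    have hPQ : P.set ⊆ Q.set := subset_of_mem_maximalCubes h𝒟
      (le_mul_of_one_le_left ht (one_le_pow₀ hc)) hP hQ (not_disjoint_iff.2 ⟨x, hxP, hxQ⟩)
    by_cases h₁ : c * orliczAvg Φ₁ R f < orliczAvg Φ₁ P f
    · exact .inl (mem_biUnion ⟨hP, hPQ, h₁⟩ hxP)
    refine .inr (mem_biUnion ⟨hP, hPQ, lt_of_not_ge fun h₂ => ?_⟩ hxP)
    have hprod := mul_le_mul (le_of_not_gt h₁) h₂ (orliczAvg_nonneg _ _ _)
      (mul_nonneg (by positivity) (orliczAvg_nonneg _ _ _))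
    have hct := mul_le_mul_of_nonneg_left hRt (sq_nonneg c)
    linarith [hP.2.1]
  have h₁ : volume (⋃ P ∈ 𝒞₁, P.set) ≤ ENNReal.ofReal (Q.vol / 4) :=
    hRc ▸ hΦ₁.volume_biUnion_le_of_lt_orliczAvg hn hf hC₁ (h𝒟.1.mono fun P hP => hP.1.1)
      ((pairwiseDisjoint_maximalCubes h𝒟 _).subset fun P hP => hP.1)
      (fun P hP => hP.2.1.trans hQR) hc fun P hP => hP.2.2
  have h₂ : volume (⋃ P ∈ 𝒞₂, P.set) ≤ ENNReal.ofReal (Q.vol / 4) :=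
    hRc ▸ hΦ₂.volume_biUnion_le_of_lt_orliczAvg hn hg hC₂ (h𝒟.1.mono fun P hP => hP.1.1)
      ((pairwiseDisjoint_maximalCubes h𝒟 _).subset fun P hP => hP.1)
      (fun P hP => hP.2.1.trans hQR) hc fun P hP => hP.2.2
  have hQ4 : 0 ≤ Q.vol / 4 := by linarith [Q.vol_pos]
  calc volume (Q.set ∩ ⋃ P ∈ M, P.set) ≤ volume ((⋃ P ∈ 𝒞₁, P.set) ∪ ⋃ P ∈ 𝒞₂, P.set) :=
        measure_mono hcover
    _ ≤ ENNReal.ofReal (Q.vol / 4) + ENNReal.ofReal (Q.vol / 4) :=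
        (measure_union_le _ _).trans (add_le_add h₁ h₂)
    _ = ENNReal.ofReal Q.vol / 2 := by
        rw [← ENNReal.ofReal_add hQ4 hQ4, show Q.vol / 4 + Q.vol / 4 = Q.vol / 2 by ring,
          ENNReal.ofReal_div_of_pos two_pos, ENNReal.ofReal_ofNat]

end Stopping

theorem four_rpow_mul_add_one (n : ℕ) (k : ℤ) :
    (4 : ℝ) ^ (((n : ℝ) + 2) * ((k + 1 : ℤ) : ℝ)) =
      (2 ^ (n + 2)) ^ 2 * (4 : ℝ) ^ (((n : ℝ) + 2) * (k : ℝ)) := by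
  have h4 : (4 : ℝ) ^ ((n : ℝ) + 2) = (2 ^ (n + 2)) ^ 2 := by
    rw [show (n : ℝ) + 2 = ((n + 2 : ℕ) : ℝ) by push_cast; ring, Real.rpow_natCast, ← pow_mul,
      mul_comm, pow_mul]
    norm_num
  rw [Int.cast_add, Int.cast_one, mul_add_one, Real.rpow_add (by norm_num), h4, mul_comm]

theorem monotone_four_rpow (n : ℕ) : Monotone fun k : ℤ => (4 : ℝ) ^ (((n : ℝ) + 2) * (k : ℝ)) :=
  fun _ _ h => Real.rpow_le_rpow_of_exponent_le (by norm_num)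
    (mul_le_mul_of_nonneg_left (Int.cast_le.2 h) (by positivity))

theorem stmt17_general {n : ℕ} (hn : 0 < n) {p₁ p₂ m₁ m₂ : ℝ}
    (hm₁ : 1 < m₁) (hm₁' : m₁ ≤ p₁) (hm₂ : 1 < m₂) (hm₂' : m₂ ≤ p₂)
    (a₁ a₂ : ℕ)
    (𝒟 : Set (Cube n)) (h𝒟 : IsDyadicGrid 𝒟)
    (f g : Euc n → ℝ) (hf : Measurable f) (hg : Measurable g)
    (hf0 : ∀ x, 0 ≤ f x) (hg0 : ∀ x, 0 ≤ g x)
    (hfb : ∃ Cf : ℝ, ∀ x, f x ≤ Cf) (hgb : ∃ Cg : ℝ, ∀ x, g x ≤ Cg)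
    (hfc : HasCompactSupport f) (hgc : HasCompactSupport g)
    (S : ℤ → Set (Cube n))
    (hS : ∀ (k : ℤ) (Q : Cube n), Q ∈ S k ↔
      Q ∈ 𝒟 ∧ (4 : ℝ) ^ (((n : ℝ) + 2) * (k : ℝ)) < orliczAvg (fun t => t ^ (p₁ / m₁) * Real.log (1 + t) ^ ((p₁ / m₁) * (a₁ : ℝ))) Q f * orliczAvg (fun t => t ^ (p₂ / m₂) * Real.log (1 + t) ^ ((p₂ / m₂) * (a₂ : ℝ))) Q g ∧
        ∀ R ∈ 𝒟, (4 : ℝ) ^ (((n : ℝ) + 2) * (k : ℝ)) < orliczAvg (fun t => t ^ (p₁ / m₁) * Real.log (1 + t) ^ ((p₁ / m₁) * (a₁ : ℝ))) R f * orliczAvg (fun t => t ^ (p₂ / m₂) * Real.log (1 + t) ^ ((p₂ / m₂) * (a₂ : ℝ))) R g →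
          Q.set ⊆ R.set → R = Q) :
    (∀ k : ℤ, ∀ Q ∈ S k,
      volume (Q.set ∩ ⋃ P ∈ S (k + 1), Cube.set P) ≤ ENNReal.ofReal Q.vol / 2) ∧
    (∀ k k' : ℤ, ∀ Q ∈ S k, ∀ Q' ∈ S k', (k, Q) ≠ (k', Q') →
      Disjoint (Q.set \ ⋃ P ∈ S (k + 1), Cube.set P)
        (Q'.set \ ⋃ P ∈ S (k' + 1), Cube.set P)) ∧
    (∀ k : ℤ, ∀ Q ∈ S k,
      ENNReal.ofReal Q.vol ≤ 2 * volume (Q.set \ ⋃ P ∈ S (k + 1), Cube.set P)) ∧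
    IsSparse (⋃ k : ℤ, S k) := by
  obtain ⟨Cf, hCf⟩ := hfb
  obtain ⟨Cg, hCg⟩ := hgb
  have hC₁ : ∀ x, |f x| ≤ Cf := fun x => (abs_of_nonneg (hf0 x)).trans_le (hCf x)
  have hC₂ : ∀ x, |g x| ≤ Cg := fun x => (abs_of_nonneg (hg0 x)).trans_le (hCg x)
  have hΦ₁ : IsOrliczFunction fun t => t ^ (p₁ / m₁) * Real.log (1 + t) ^ (p₁ / m₁ * a₁) :=
    isOrliczFunction_rpow_mul_log ((one_le_div (by linarith)).2 hm₁')
    (mul_nonneg (div_nonneg (by linarith) (by linarith)) a₁.cast_nonneg)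
  have hΦ₂ : IsOrliczFunction fun t => t ^ (p₂ / m₂) * Real.log (1 + t) ^ (p₂ / m₂ * a₂) :=
    isOrliczFunction_rpow_mul_log ((one_le_div (by linarith)).2 hm₂')
    (mul_nonneg (div_nonneg (by linarith) (by linarith)) a₂.cast_nonneg)
  set a : Cube n → ℝ := fun Q =>
    orliczAvg (fun t => t ^ (p₁ / m₁) * Real.log (1 + t) ^ (p₁ / m₁ * a₁)) Q f *
      orliczAvg (fun t => t ^ (p₂ / m₂) * Real.log (1 + t) ^ (p₂ / m₂ * a₂)) Q g
  set T : ℤ → ℝ := fun k => (4 : ℝ) ^ (((n : ℝ) + 2) * (k : ℝ))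
  have hSk : ∀ k, S k = maximalCubes 𝒟 a (T k) := fun k => Set.ext (hS k)
  simp only [hSk]
  have hhalf : ∀ k, ∀ Q ∈ maximalCubes 𝒟 a (T k),
      volume (Q.set ∩ ⋃ P ∈ maximalCubes 𝒟 a (T (k + 1)), P.set) ≤ ENNReal.ofReal Q.vol / 2 :=
    fun k Q hQ => by
      rw [show T (k + 1) = (2 ^ (n + 2)) ^ 2 * T k from four_rpow_mul_add_one n k]
      exact volume_inter_iUnion_maximalCubes_le hn h𝒟 hΦ₁ hΦ₂ hf hg hC₁ hC₂ (by positivity) hQ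
  have hdisj : ∀ k k', ∀ Q ∈ maximalCubes 𝒟 a (T k), ∀ Q' ∈ maximalCubes 𝒟 a (T k'),
      (k, Q) ≠ (k', Q') → Disjoint (Q.set \ ⋃ P ∈ maximalCubes 𝒟 a (T (k + 1)), P.set)
        (Q'.set \ ⋃ P ∈ maximalCubes 𝒟 a (T (k' + 1)), P.set) :=
    fun _ _ _ hQ _ hQ' => disjoint_diff_iUnion_maximalCubes hn h𝒟 (monotone_four_rpow n)
      (fun _ => (exists_forall_orliczAvg_mul_le hΦ₁ hΦ₂ hf hg hC₁ hC₂ hfc hgc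
        (by positivity)).imp fun _ hV R _ => hV R) hQ hQ'
  have hdouble : ∀ k, ∀ Q ∈ maximalCubes 𝒟 a (T k),
      ENNReal.ofReal Q.vol ≤ 2 * volume (Q.set \ ⋃ P ∈ maximalCubes 𝒟 a (T (k + 1)), P.set) :=
    fun k Q hQ => Q.volume_set ▸
      le_two_mul_measure_diff Q.volume_set_ne_top (Q.volume_set ▸ hhalf k Q hQ)
  exact ⟨hhalf, hdisj, hdouble,
    isSparse_iUnion _ (fun k Q hQ => ⟨sdiff_subset, hdouble k Q hQ⟩) hdisj⟩

theorem stmt17 {n : ℕ} (hn : 0 < n) {p₁ p₂ m₁ m₂ : ℝ}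
    (hp₁ : 1 < p₁) (hp₂ : 1 < p₂)
    (hm₁ : 1 < m₁) (hm₁' : m₁ ≤ p₁) (hm₂ : 1 < m₂) (hm₂' : m₂ ≤ p₂)
    (a₁ a₂ : ℕ)
    (𝒟 : Set (Cube n)) (h𝒟 : IsDyadicGrid 𝒟)
    (f g : Euc n → ℝ) (hf : Measurable f) (hg : Measurable g)
    (hf0 : ∀ x, 0 ≤ f x) (hg0 : ∀ x, 0 ≤ g x)
    (hfb : ∃ Cf : ℝ, ∀ x, f x ≤ Cf) (hgb : ∃ Cg : ℝ, ∀ x, g x ≤ Cg)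
    (hfc : HasCompactSupport f) (hgc : HasCompactSupport g)
    (S : ℤ → Set (Cube n))
    (hS : ∀ (k : ℤ) (Q : Cube n), Q ∈ S k ↔
      Q ∈ 𝒟 ∧ (4 : ℝ) ^ (((n : ℝ) + 2) * (k : ℝ)) < orliczAvg (fun t => t ^ (p₁ / m₁) * Real.log (1 + t) ^ ((p₁ / m₁) * (a₁ : ℝ))) Q f * orliczAvg (fun t => t ^ (p₂ / m₂) * Real.log (1 + t) ^ ((p₂ / m₂) * (a₂ : ℝ))) Q g ∧
        ∀ R ∈ 𝒟, (4 : ℝ) ^ (((n : ℝ) + 2) * (k : ℝ)) < orliczAvg (fun t => t ^ (p₁ / m₁) * Real.log (1 + t) ^ ((p₁ / m₁) * (a₁ : ℝ))) R f * orliczAvg (fun t => t ^ (p₂ / m₂) * Real.log (1 + t) ^ ((p₂ / m₂) * (a₂ : ℝ))) R g →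
          Q.set ⊆ R.set → R = Q) :
    (∀ k : ℤ, ∀ Q ∈ S k,
      volume (Q.set ∩ ⋃ P ∈ S (k + 1), Cube.set P) ≤ ENNReal.ofReal Q.vol / 2) ∧
    (∀ k k' : ℤ, ∀ Q ∈ S k, ∀ Q' ∈ S k', (k, Q) ≠ (k', Q') →
      Disjoint (Q.set \ ⋃ P ∈ S (k + 1), Cube.set P)
        (Q'.set \ ⋃ P ∈ S (k' + 1), Cube.set P)) ∧
    (∀ k : ℤ, ∀ Q ∈ S k,
      ENNReal.ofReal Q.vol ≤ 2 * volume (Q.set \ ⋃ P ∈ S (k + 1), Cube.set P)) ∧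
    IsSparse (⋃ k : ℤ, S k) :=
  stmt17_general hn hm₁ hm₁' hm₂ hm₂' a₁ a₂ 𝒟 h𝒟 f g hf hg hf0 hg0 hfb hgb hfc hgc S hS
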